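/- If ε ∈ (0, 1], then statement A(η, L, c) implies statement B(η, ε, ⌈(log ε⁻¹)/c⌉ · L). -/
import Mathlib


open Real Pointwise

noncomputable section

abbrev Fvec (n : ℕ) : Type := Fin n → ZMod 2

/-- Shannon entropy (natural log) of a finitely supported distribution. -/
def ent {A : Type*} (p : A → ℝ) : ℝ := ∑ᶠ a, Real.negMulLog (p a)

/-- `p` is a (finitely supported) probability distribution. -/
def IsDist {A : Type*} (p : A → ℝ) : Prop := (∀ a, 0 ≤ p a) ∧ ∑ᶠ a, p a = 1

/-- Pushforward of a distribution along a map: the distribution of `f(X)` for `X ∼ p`. -/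
def push {A B : Type*} (f : A → B) (p : A → ℝ) : B → ℝ := fun b => ∑ᶠ a ∈ f ⁻¹' {b}, p a

/-- Joint distribution of a pair of independent random variables. -/
def prodDist {A B : Type*} (p : A → ℝ) (q : B → ℝ) : A × B → ℝ := fun z => p z.1 * q z.2

/-- Distribution of `X + Y` for independent `X ∼ p`, `Y ∼ q`. -/
def conv {A : Type*} [AddGroup A] (p q : A → ℝ) : A → ℝ := fun z => ∑ᶠ x, p x * q (z - x)

/-- The distribution of `X` conditioned on `U = b`, where `r` is the joint distribution of `(X, U)`. -/
def fiber {A B : Type*} (r : A × B → ℝ) (b : B) : A → ℝ := fun a => r (a, b) / push Prod.snd r b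

/-- Conditional entropy `H[X | U]` of a joint distribution `r` of `(X, U)`. -/
def condEnt {A B : Type*} (r : A × B → ℝ) : ℝ := ∑ᶠ b, push Prod.snd r b * ent (fiber r b)

/-- Doubling mass `s[X ; Y]` (of independent copies with distributions `p`, `q`). -/
def sDouble {A : Type*} [AddGroup A] (p q : A → ℝ) : ℝ := ent p + ent q - ent (conv p q)

/-- Conditional doubling mass `s[X | U ; Y | W] = 𝔼_{u ∼ U, w ∼ W} s[X_u ; Y_w]`,
where `r1`, `r2` are the joint distributions of `(X, U)` and `(Y, W)`. -/
def sCond {A U W : Type*} [AddGroup A] (r1 : A × U → ℝ) (r2 : A × W → ℝ) : ℝ :=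
  ∑ᶠ u, ∑ᶠ w, push Prod.snd r1 u * push Prod.snd r2 w * sDouble (fiber r1 u) (fiber r2 w)

/-- Conditional mutual information `I[A : B | S]` of a joint distribution of `(A, B, S)`. -/
def condMI {A B S : Type*} (r : A × B × S → ℝ) : ℝ :=
  ent (push (fun z => (z.1, z.2.2)) r) + ent (push (fun z => z.2) r)
    - ent r - ent (push (fun z => z.2.2) r)

/-- Uniform distribution on a set. -/
def unifOn {A : Type*} (s : Set A) : A → ℝ := s.indicator fun _ => (Nat.card s : ℝ)⁻¹

/-- Entropic Ruzsa distance `d[X ; Y]`. -/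
def dRuzsa {A : Type*} [AddGroup A] (p q : A → ℝ) : ℝ := ent (conv p q) - ent p / 2 - ent q / 2

/-- Joint distribution of `(X, X + Y)` for independent `X ∼ p`, `Y ∼ q`. -/
def jointSum {A : Type*} [AddGroup A] (p q : A → ℝ) : A × A → ℝ :=
  push (fun z : A × A => (z.1, z.1 + z.2)) (prodDist p q)

/-- Joint distribution of `(X, π_V(X))`. -/
def selfProj {n : ℕ} (V : Submodule (ZMod 2) (Fvec n)) (p : Fvec n → ℝ) :
    Fvec n × (Fvec n ⧸ V) → ℝ := push (fun x => (x, V.mkQ x)) p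

/-- Joint distribution of independent `(X₁, X₂, Y₁, Y₂)` with `X₁, X₂ ∼ p` and `Y₁, Y₂ ∼ q`. -/
def quad {A : Type*} (p q : A → ℝ) : A × A × A × A → ℝ :=
  fun z => p z.1 * p z.2.1 * q z.2.2.1 * q z.2.2.2

/-- Distribution of `X₁ + ⋯ + X_k` for independent `Xᵢ ∼ p i`. -/
def indepSum {A : Type*} [AddCommGroup A] (k : ℕ) (p : Fin k → A → ℝ) : A → ℝ :=
  push (fun x : Fin k → A => ∑ i, x i) (fun x => ∏ i, p i (x i))

/-- Statement `A(η, L, c)` from the paper. -/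
def StA (η L c : ℝ) : Prop :=
  ∀ (n : ℕ) (p q : Fvec n → ℝ), IsDist p → IsDist q →
    ent (conv p q) ≤ (1 - η) * (ent p + ent q) →
    ∃ V : Submodule (ZMod 2) (Fvec n),
      ent (unifOn (V : Set (Fvec n))) ≤ L * (ent p + ent q) ∧
      ent (push V.mkQ p) + ent (push V.mkQ q) ≤ (1 - c) * (ent p + ent q)

/-- Statement `B(η, ε, L)` from the paper. -/
def StB (η ε L : ℝ) : Prop :=
  ∀ (n : ℕ) (p q : Fvec n → ℝ), IsDist p → IsDist q →
    ∃ V : Submodule (ZMod 2) (Fvec n),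
      ent (unifOn (V : Set (Fvec n))) ≤ L * (ent p + ent q) ∧
      ent (conv (push V.mkQ p) (push V.mkQ q)) ≥
        (1 - η) * (ent (push V.mkQ p) + ent (push V.mkQ q)) - ε * (ent p + ent q)


section Helpers
open Finset
variable {A B C : Type*}

lemma ent_fin [Fintype A] (p : A → ℝ) : ent p = ∑ a, Real.negMulLog (p a) :=
  finsum_eq_sum_of_fintype _

lemma push_apply [Fintype A] [DecidableEq B] (f : A → B) (p : A → ℝ) (b : B) :
    push f p b = ∑ a ∈ univ.filter (fun a => f a = b), p a := by
  have h : f ⁻¹' {b} = ↑(univ.filter (fun a => f a = b)) := by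
    ext a; simp
  rw [push, h, finsum_mem_coe_finset]

lemma sum_push [Fintype A] [Fintype B] (f : A → B) (p : A → ℝ) :
    ∑ b, push f p b = ∑ a, p a := by
  classical
  simp only [push_apply]
  exact Finset.sum_fiberwise_of_maps_to (fun a _ => mem_univ (f a)) p

lemma isDist_push [Fintype A] [Fintype B] (f : A → B) {p : A → ℝ} (hp : IsDist p) :
    IsDist (push f p) := by
  classical
  constructor
  · intro b; rw [push_apply]; exact Finset.sum_nonneg fun a _ => hp.1 a
  · rw [finsum_eq_sum_of_fintype, sum_push, ← finsum_eq_sum_of_fintype]; exact hp.2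

lemma push_push [Fintype A] [Fintype B] (f : A → B) (g : B → C) (p : A → ℝ) :
    push g (push f p) = push (g ∘ f) p := by
  classical
  funext c
  rw [push_apply]
  have : ∀ b ∈ univ.filter (fun b => g b = c), push f p b
      = ∑ a ∈ (univ.filter (fun a => g (f a) = c)).filter (fun a => f a = b), p a := by
    intro b hb
    rw [push_apply]
    apply Finset.sum_congr _ (fun _ _ => rfl)
    ext a
    simp only [Finset.mem_filter, Finset.mem_univ, true_and, Finset.mem_filter]
    constructor
    · intro h; exact ⟨h ▸ (Finset.mem_filter.mp hb).2, h⟩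
    · exact fun h => h.2
  rw [Finset.sum_congr rfl this, push_apply]
  exact Finset.sum_fiberwise_of_maps_to
    (fun a ha => by simp only [mem_filter, mem_univ, true_and] at ha ⊢; exact ha) p

lemma push_equiv_apply [Fintype A] (e : A ≃ B) (p : A → ℝ) (b : B) :
    push (⇑e) p b = p (e.symm b) := by
  have h : ⇑e ⁻¹' {b} = {e.symm b} := by
    ext a; simp [Equiv.eq_symm_apply, eq_comm]
  rw [push, h, finsum_mem_singleton]

lemma ent_push_equiv [Fintype A] [Fintype B] (e : A ≃ B) (p : A → ℝ) :
    ent (push (⇑e) p) = ent p := by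
  rw [ent_fin, ent_fin]
  simp only [push_equiv_apply]
  exact Equiv.sum_comp e.symm fun a => Real.negMulLog (p a)

lemma ent_push_bij [Fintype A] [Fintype B] (f : A → B) (hf : Function.Bijective f)
    (p : A → ℝ) : ent (push f p) = ent p :=
  ent_push_equiv (Equiv.ofBijective f hf) p

lemma conv_push_addEquiv [Fintype A] [Fintype B] [AddCommGroup A] [AddCommGroup B]
    (e : A ≃+ B) (p q : A → ℝ) :
    conv (push (⇑e) p) (push (⇑e) q) = push (⇑e) (conv p q) := by
  funext b
  rw [show ⇑e = ⇑e.toEquiv from rfl, push_equiv_apply]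
  rw [conv, conv, finsum_eq_sum_of_fintype, finsum_eq_sum_of_fintype]
  rw [← Equiv.sum_comp e.toEquiv (fun x => push (⇑e.toEquiv) p x * push (⇑e.toEquiv) q (b - x))]
  apply Finset.sum_congr rfl
  intro x _
  rw [push_equiv_apply, push_equiv_apply]
  have h2 : e.toEquiv.symm (b - e.toEquiv x) = e.symm b - x := by
    rw [show (⇑e.toEquiv.symm : B → A) = ⇑e.symm from rfl, map_sub]
    simp
  rw [h2]
  simp

lemma isDist_conv [Fintype A] [AddCommGroup A] {p q : A → ℝ} (hp : IsDist p) (hq : IsDist q) :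
    IsDist (conv p q) := by
  constructor
  · intro z
    rw [conv, finsum_eq_sum_of_fintype]
    exact Finset.sum_nonneg fun x _ => mul_nonneg (hp.1 x) (hq.1 (z - x))
  · rw [finsum_eq_sum_of_fintype]
    simp only [conv, finsum_eq_sum_of_fintype]
    rw [Finset.sum_comm]
    have hq1 : ∑ z, q z = 1 := by rw [← finsum_eq_sum_of_fintype]; exact hq.2
    have hp1 : ∑ x, p x = 1 := by rw [← finsum_eq_sum_of_fintype]; exact hp.2
    calc ∑ x, ∑ z, p x * q (z - x) = ∑ x, p x * ∑ z, q (z - x) := by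
          simp [Finset.mul_sum]
      _ = ∑ x, p x * 1 := by
          apply Finset.sum_congr rfl; intro x _
          congr 1
          rw [← hq1]
          exact Equiv.sum_comp (Equiv.subRight x) q
      _ = 1 := by simpa using hp1

lemma dist_le_one [Fintype A] {p : A → ℝ} (hp : IsDist p) (a : A) : p a ≤ 1 := by
  have h := hp.2
  rw [finsum_eq_sum_of_fintype] at h
  calc p a ≤ ∑ x, p x := Finset.single_le_sum (fun i _ => hp.1 i) (Finset.mem_univ a)
    _ = 1 := h

lemma ent_nonneg [Fintype A] {p : A → ℝ} (hp : IsDist p) : 0 ≤ ent p := by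
  rw [ent_fin]
  exact Finset.sum_nonneg fun a _ => Real.negMulLog_nonneg (hp.1 a) (dist_le_one hp a)

lemma ent_unifOn [Fintype A] (s : Set A) (hs : s.Nonempty) :
    ent (unifOn s) = Real.log (Nat.card s) := by
  classical
  have hfin : s.Finite := s.toFinite
  have hcard : (hfin.toFinset.card : ℝ) = (Nat.card s : ℝ) := by
    rw [Nat.card_coe_set_eq, Set.ncard_eq_toFinset_card s hfin]
  have hk0 : (0 : ℝ) < (Nat.card s : ℝ) := by
    haveI := hs.to_subtype
    have : 0 < Nat.card s := Nat.card_pos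
    exact_mod_cast this
  rw [ent_fin]
  rw [← Finset.sum_subset (Finset.subset_univ hfin.toFinset)
    (fun x _ hx => by
      rw [Set.Finite.mem_toFinset] at hx
      simp [unifOn, Set.indicator_of_notMem hx])]
  have : ∀ a ∈ hfin.toFinset, Real.negMulLog (unifOn s a)
      = Real.negMulLog ((Nat.card s : ℝ)⁻¹) := by
    intro a ha
    rw [Set.Finite.mem_toFinset] at ha
    rw [unifOn, Set.indicator_of_mem ha]
  rw [Finset.sum_congr rfl this, Finset.sum_const, nsmul_eq_mul, hcard]
  have hk : (Nat.card s : ℝ) ≠ 0 := ne_of_gt hk0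
  rw [Real.negMulLog, Real.log_inv, neg_mul_neg, ← mul_assoc, mul_inv_cancel₀ hk, one_mul]

end Helpers

section Card
variable {A B : Type*} [AddCommGroup A] [AddCommGroup B]

lemma card_comap_addHom [Finite A] (f : A →+ B) (hf : Function.Surjective f)
    (W : AddSubgroup B) :
    Nat.card (AddSubgroup.comap f W) = Nat.card f.ker * Nat.card W := by
  haveI : Finite B := Finite.of_surjective f hf
  have h1 : Nat.card (AddSubgroup.comap f W) * (AddSubgroup.comap f W).index = Nat.card A :=
    AddSubgroup.card_mul_index _
  have h2 : (AddSubgroup.comap f W).index = W.index :=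
    AddSubgroup.index_comap_of_surjective _ hf
  have h3 : Nat.card W * W.index = Nat.card B := AddSubgroup.card_mul_index _
  have h4 : Nat.card f.ker * f.ker.index = Nat.card A := AddSubgroup.card_mul_index _
  have h5 : f.ker.index = Nat.card B := by
    rw [AddSubgroup.index_ker, AddMonoidHom.range_eq_top.mpr hf, AddSubgroup.card_top]
  have hipos : W.index ≠ 0 := AddSubgroup.index_ne_zero_of_finite
  apply Nat.eq_of_mul_eq_mul_right (Nat.pos_of_ne_zero hipos)
  rw [← h2, h1, ← h4, h5, ← h3, mul_assoc, h2]

end Card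

lemma card_comap_submodule {R M N : Type*} [Ring R] [AddCommGroup M] [AddCommGroup N]
    [Module R M] [Module R N] [Finite M] (g : M →ₗ[R] N) (hg : Function.Surjective g)
    (W : Submodule R N) :
    Nat.card (Submodule.comap g W) = Nat.card (LinearMap.ker g) * Nat.card W := by
  have h := card_comap_addHom g.toAddMonoidHom hg W.toAddSubgroup
  have e1 : Nat.card (AddSubgroup.comap g.toAddMonoidHom W.toAddSubgroup)
      = Nat.card (Submodule.comap g W) :=
    Nat.card_congr (Equiv.subtypeEquivRight (fun x => by
      simp [AddSubgroup.mem_comap, Submodule.mem_comap]))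
  have e2 : Nat.card g.toAddMonoidHom.ker = Nat.card (LinearMap.ker g) :=
    Nat.card_congr (Equiv.subtypeEquivRight (fun x => by
      simp [AddMonoidHom.mem_ker, LinearMap.mem_ker]))
  have e3 : Nat.card W.toAddSubgroup = Nat.card W :=
    Nat.card_congr (Equiv.subtypeEquivRight (fun x => by simp))
  rw [← e1, ← e2, ← e3, h]

lemma ent_unifOn_sub {n : ℕ} (V : Submodule (ZMod 2) (Fvec n)) :
    ent (unifOn (V : Set (Fvec n))) = Real.log (Nat.card V) := by
  rw [ent_unifOn _ ⟨0, V.zero_mem⟩, SetLike.coe_sort_coe]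

lemma ent_unifOn_bot (n : ℕ) :
    ent (unifOn ((⊥ : Submodule (ZMod 2) (Fvec n)) : Set (Fvec n))) = 0 := by
  rw [ent_unifOn_sub]
  simp [Nat.card_unique]

lemma ent_conv_push_bij {M N : Type*} [AddCommGroup M] [AddCommGroup N]
    [Fintype M] [Fintype N] (f : M → N) (hf : Function.Bijective f)
    (hadd : ∀ x y, f (x + y) = f x + f y) (p q : M → ℝ) :
    ent (conv (push f p) (push f q)) = ent (conv p q) := by
  let E : M ≃+ N := { Equiv.ofBijective f hf with map_add' := hadd }
  have hE : ⇑E = f := rfl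
  rw [← hE, conv_push_addEquiv]
  exact ent_push_bij _ hf _

lemma mkQ_bot_bij (n : ℕ) :
    Function.Bijective ⇑(Submodule.mkQ (⊥ : Submodule (ZMod 2) (Fvec n))) :=
  ⟨LinearMap.ker_eq_bot.mp (Submodule.ker_mkQ ⊥), Submodule.mkQ_surjective ⊥⟩

set_option maxHeartbeats 2000000 in
lemma key {η L c : ℝ} (hη : 0 < η) (hc : 0 < c) (hc1 : c < 1) (hL : 0 ≤ L) (hA : StA η L c)
    (m : ℕ) : ∀ (n : ℕ) (p q : Fvec n → ℝ), IsDist p → IsDist q →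
    ∃ V : Submodule (ZMod 2) (Fvec n),
      ent (unifOn (V : Set (Fvec n))) ≤ m * L * (ent p + ent q) ∧
      ent (push V.mkQ p) + ent (push V.mkQ q) ≤ ent p + ent q ∧
      ((1 - η) * (ent (push V.mkQ p) + ent (push V.mkQ q))
          ≤ ent (conv (push V.mkQ p) (push V.mkQ q))
        ∨ ent (push V.mkQ p) + ent (push V.mkQ q) ≤ (1 - c) ^ m * (ent p + ent q)) := by
  induction m with
  | zero =>
    intro n p q hp hq
    haveI : Finite (Fvec n ⧸ (⊥ : Submodule (ZMod 2) (Fvec n))) :=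
      Finite.of_surjective _ (Submodule.mkQ_surjective _)
    letI : Fintype (Fvec n ⧸ (⊥ : Submodule (ZMod 2) (Fvec n))) := Fintype.ofFinite _
    have h1 : ent (push (Submodule.mkQ (⊥ : Submodule (ZMod 2) (Fvec n))) p) = ent p :=
      ent_push_bij _ (mkQ_bot_bij n) p
    have h2 : ent (push (Submodule.mkQ (⊥ : Submodule (ZMod 2) (Fvec n))) q) = ent q :=
      ent_push_bij _ (mkQ_bot_bij n) q
    refine ⟨⊥, ?_, ?_, Or.inr ?_⟩
    · rw [ent_unifOn_bot]; simp
    · rw [h1, h2]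
    · rw [h1, h2]; simp
  | succ m ih =>
    intro n p q hp hq
    have hS0 : 0 ≤ ent p + ent q := add_nonneg (ent_nonneg hp) (ent_nonneg hq)
    by_cases hcase : ent (conv p q) ≤ (1 - η) * (ent p + ent q)
    · obtain ⟨V, hV1, hV2⟩ := hA n p q hp hq hcase
      haveI : Finite (Fvec n ⧸ V) := Finite.of_surjective _ (Submodule.mkQ_surjective V)
      letI : Fintype (Fvec n ⧸ V) := Fintype.ofFinite _
      haveI : Module.Finite (ZMod 2) (Fvec n ⧸ V) :=
        Module.Finite.of_surjective V.mkQ (Submodule.mkQ_surjective V)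
      obtain ⟨d, ⟨e⟩⟩ : ∃ d, Nonempty ((Fvec n ⧸ V) ≃ₗ[ZMod 2] Fvec d) :=
        ⟨Module.finrank (ZMod 2) (Fvec n ⧸ V),
          ⟨(Module.finBasis (ZMod 2) (Fvec n ⧸ V)).equivFun⟩⟩
      let g : Fvec n →ₗ[ZMod 2] Fvec d := e.toLinearMap ∘ₗ V.mkQ
      have hgfun : ⇑g = ⇑e ∘ ⇑V.mkQ := rfl
      have hgsurj : Function.Surjective ⇑g := by
        rw [hgfun]; exact e.surjective.comp (Submodule.mkQ_surjective V)
      have hgker : LinearMap.ker g = V := by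
        show LinearMap.ker (e.toLinearMap ∘ₗ V.mkQ) = V
        rw [LinearMap.ker_comp, LinearEquiv.ker, Submodule.comap_bot, Submodule.ker_mkQ]
      have hp' : IsDist (push ⇑g p) := isDist_push _ hp
      have hq' : IsDist (push ⇑g q) := isDist_push _ hq
      have hentp' : ent (push ⇑g p) = ent (push V.mkQ p) := by
        rw [hgfun, ← push_push, ent_push_bij _ e.bijective]
      have hentq' : ent (push ⇑g q) = ent (push V.mkQ q) := by
        rw [hgfun, ← push_push, ent_push_bij _ e.bijective]
      obtain ⟨W, hW1, hW2, hW3⟩ := ih d (push ⇑g p) (push ⇑g q) hp' hq'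
      set V'' := Submodule.comap g W with hV''
      haveI : Finite (Fvec d ⧸ W) := Finite.of_surjective _ (Submodule.mkQ_surjective W)
      letI : Fintype (Fvec d ⧸ W) := Fintype.ofFinite _
      haveI : Finite (Fvec n ⧸ V'') := Finite.of_surjective _ (Submodule.mkQ_surjective V'')
      letI : Fintype (Fvec n ⧸ V'') := Fintype.ofFinite _
      let ψ : (Fvec n ⧸ V'') →ₗ[ZMod 2] (Fvec d ⧸ W) := Submodule.mapQ V'' W g le_rfl
      have hψsurj : Function.Surjective ⇑ψ := by
        intro b
        obtain ⟨y, rfl⟩ := Submodule.mkQ_surjective W b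
        obtain ⟨x, rfl⟩ := hgsurj y
        exact ⟨Submodule.mkQ V'' x, by
          rw [Submodule.mkQ_apply, Submodule.mkQ_apply]
          exact Submodule.mapQ_apply _ _ _ _⟩
      have hψinj : Function.Injective ⇑ψ := by
        rw [← LinearMap.ker_eq_bot, eq_bot_iff]
        intro a ha
        obtain ⟨x, rfl⟩ := Submodule.mkQ_surjective V'' a
        rw [LinearMap.mem_ker, Submodule.mkQ_apply,
          Submodule.mapQ_apply, Submodule.Quotient.mk_eq_zero] at ha
        rw [Submodule.mem_bot, Submodule.mkQ_apply,
          Submodule.Quotient.mk_eq_zero]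
        exact Submodule.mem_comap.mpr ha
      have hcomm : ⇑ψ ∘ ⇑V''.mkQ = ⇑W.mkQ ∘ ⇑g := by
        funext x
        simp only [Function.comp_apply, Submodule.mkQ_apply]
        exact Submodule.mapQ_apply _ _ _ _
      have hkey : ∀ r : Fvec n → ℝ,
          push ⇑W.mkQ (push ⇑g r) = push ⇑ψ (push ⇑V''.mkQ r) := by
        intro r; rw [push_push, push_push, hcomm]
      have hent : ∀ r : Fvec n → ℝ,
          ent (push ⇑V''.mkQ r) = ent (push ⇑W.mkQ (push ⇑g r)) := by
        intro r; rw [hkey, ent_push_bij ⇑ψ ⟨hψinj, hψsurj⟩]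
      have hconv : ent (conv (push ⇑V''.mkQ p) (push ⇑V''.mkQ q))
          = ent (conv (push ⇑W.mkQ (push ⇑g p)) (push ⇑W.mkQ (push ⇑g q))) := by
        rw [hkey, hkey, ent_conv_push_bij ⇑ψ ⟨hψinj, hψsurj⟩ (map_add ψ)]
      -- cardinality
      have hcards : Nat.card V'' = Nat.card V * Nat.card W := by
        rw [hV'', card_comap_submodule g hgsurj W, hgker]
      have hVpos : (0:ℝ) < Nat.card V := by
        haveI : Nonempty V := ⟨0⟩
        exact_mod_cast Nat.card_pos
      have hWpos : (0:ℝ) < Nat.card W := by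
        haveI : Nonempty W := ⟨0⟩
        exact_mod_cast Nat.card_pos
      have hunif : ent (unifOn (V'' : Set (Fvec n)))
          = ent (unifOn (V : Set (Fvec n))) + ent (unifOn (W : Set (Fvec d))) := by
        rw [ent_unifOn_sub, ent_unifOn_sub, ent_unifOn_sub, hcards, Nat.cast_mul,
          Real.log_mul (ne_of_gt hVpos) (ne_of_gt hWpos)]
      have hSV0 : 0 ≤ ent (push V.mkQ p) + ent (push V.mkQ q) :=
        add_nonneg (ent_nonneg (isDist_push _ hp)) (ent_nonneg (isDist_push _ hq))
      have hSVle : ent (push V.mkQ p) + ent (push V.mkQ q) ≤ ent p + ent q := by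
        nlinarith
      refine ⟨V'', ?_, ?_, ?_⟩
      · rw [hunif]
        have h1 : ent (unifOn (W : Set (Fvec d))) ≤ m * L * (ent p + ent q) := by
          calc ent (unifOn (W : Set (Fvec d)))
              ≤ m * L * (ent (push ⇑g p) + ent (push ⇑g q)) := hW1
            _ ≤ m * L * (ent p + ent q) := by
                rw [hentp', hentq']
                exact mul_le_mul_of_nonneg_left hSVle
                  (mul_nonneg (Nat.cast_nonneg m) hL)
        push_cast
        nlinarith
      · rw [hent p, hent q]
        calc ent (push ⇑W.mkQ (push ⇑g p)) + ent (push ⇑W.mkQ (push ⇑g q))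
            ≤ ent (push ⇑g p) + ent (push ⇑g q) := hW2
          _ ≤ ent p + ent q := by rw [hentp', hentq']; exact hSVle
      · rcases hW3 with h | h
        · left
          rw [hent p, hent q, hconv]
          exact h
        · right
          rw [hent p, hent q]
          have hpow : (0:ℝ) ≤ (1 - c) ^ m := pow_nonneg (by linarith) m
          calc ent (push ⇑W.mkQ (push ⇑g p)) + ent (push ⇑W.mkQ (push ⇑g q))
              ≤ (1 - c) ^ m * (ent (push ⇑g p) + ent (push ⇑g q)) := h
            _ = (1 - c) ^ m * (ent (push V.mkQ p) + ent (push V.mkQ q)) := by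
                rw [hentp', hentq']
            _ ≤ (1 - c) ^ m * ((1 - c) * (ent p + ent q)) := by
                exact mul_le_mul_of_nonneg_left hV2 hpow
            _ = (1 - c) ^ (m + 1) * (ent p + ent q) := by ring
    · push_neg at hcase
      haveI : Finite (Fvec n ⧸ (⊥ : Submodule (ZMod 2) (Fvec n))) :=
        Finite.of_surjective _ (Submodule.mkQ_surjective _)
      letI : Fintype (Fvec n ⧸ (⊥ : Submodule (ZMod 2) (Fvec n))) := Fintype.ofFinite _
      have h1 : ent (push (Submodule.mkQ (⊥ : Submodule (ZMod 2) (Fvec n))) p) = ent p :=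
        ent_push_bij _ (mkQ_bot_bij n) p
      have h2 : ent (push (Submodule.mkQ (⊥ : Submodule (ZMod 2) (Fvec n))) q) = ent q :=
        ent_push_bij _ (mkQ_bot_bij n) q
      have h3 : ent (conv (push (Submodule.mkQ (⊥ : Submodule (ZMod 2) (Fvec n))) p)
          (push (Submodule.mkQ (⊥ : Submodule (ZMod 2) (Fvec n))) q)) = ent (conv p q) :=
        ent_conv_push_bij _ (mkQ_bot_bij n) (map_add _) p q
      refine ⟨⊥, ?_, ?_, Or.inl ?_⟩
      · rw [ent_unifOn_bot]; positivity
      · rw [h1, h2]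
      · rw [h1, h2, h3]; linarith



/-- If `ε ∈ (0, 1]`, then `A(η, L, c)` implies `B(η, ε, ⌈(log ε⁻¹)/c⌉ L)`. -/
theorem statement14 (η ε L c : ℝ) (hη : η ∈ Set.Ioc (0 : ℝ) (1 / 2))
    (hε : ε ∈ Set.Ioc (0 : ℝ) 1) (hL : 0 ≤ L) (hc : c ∈ Set.Ioo (0 : ℝ) 1)
    (hA : StA η L c) : StB η ε ((⌈Real.log ε⁻¹ / c⌉₊ : ℝ) * L) := by
  obtain ⟨hη0, hη2⟩ := hη
  obtain ⟨hε0, hε1⟩ := hε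
  obtain ⟨hc0, hc1⟩ := hc
  intro n p q hp hq
  set m := ⌈Real.log ε⁻¹ / c⌉₊ with hm
  obtain ⟨V, hV1, hV2, hV3⟩ := key hη0 hc0 hc1 hL hA m n p q hp hq
  have hS0 : 0 ≤ ent p + ent q := add_nonneg (ent_nonneg hp) (ent_nonneg hq)
  haveI : Finite (Fvec n ⧸ V) := Finite.of_surjective _ (Submodule.mkQ_surjective V)
  letI : Fintype (Fvec n ⧸ V) := Fintype.ofFinite _
  have hpd : IsDist (push V.mkQ p) := isDist_push _ hp
  have hqd : IsDist (push V.mkQ q) := isDist_push _ hq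
  have hSV0 : 0 ≤ ent (push V.mkQ p) + ent (push V.mkQ q) :=
    add_nonneg (ent_nonneg hpd) (ent_nonneg hqd)
  have hconv0 : 0 ≤ ent (conv (push V.mkQ p) (push V.mkQ q)) :=
    ent_nonneg (isDist_conv hpd hqd)
  have hεS : 0 ≤ ε * (ent p + ent q) := mul_nonneg (le_of_lt hε0) hS0
  refine ⟨V, hV1, ?_⟩
  rcases hV3 with h | h
  · linarith
  · -- small case: project entropies are tiny
    have hcm : Real.log ε⁻¹ ≤ c * m := by
      have h1 := Nat.le_ceil (Real.log ε⁻¹ / c)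
      calc Real.log ε⁻¹ = Real.log ε⁻¹ / c * c := by field_simp
        _ ≤ (m : ℝ) * c := mul_le_mul_of_nonneg_right h1 (le_of_lt hc0)
        _ = c * m := mul_comm _ _
    have h1 : (1 - c) ^ m ≤ Real.exp (-c) ^ m :=
      pow_le_pow_left₀ (by linarith) (by linarith [Real.add_one_le_exp (-c)]) m
    have h2 : Real.exp (-c) ^ m = Real.exp (-(c * m)) := by
      rw [← Real.exp_nat_mul]; congr 1; ring
    have h3 : Real.exp (-(c * m)) ≤ ε := by
      have hlog : -(c * m) ≤ Real.log ε := by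
        rw [Real.log_inv] at hcm; linarith
      calc Real.exp (-(c * m)) ≤ Real.exp (Real.log ε) := Real.exp_le_exp.mpr hlog
        _ = ε := Real.exp_log hε0
    have hpow : (1 - c) ^ m ≤ ε := by
      rw [← h2] at h3; exact le_trans h1 h3
    have hsmall : ent (push V.mkQ p) + ent (push V.mkQ q) ≤ ε * (ent p + ent q) :=
      le_trans h (mul_le_mul_of_nonneg_right hpow hS0)
    have : (1 - η) * (ent (push V.mkQ p) + ent (push V.mkQ q))
        ≤ ent (push V.mkQ p) + ent (push V.mkQ q) := by nlinarith
    linarith
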